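/- Let M be a second countable locally open-convex compact topological median algebra, and let C, C′ ⊆ M be disjoint nonempty closed convex sets. Then there exists an admissible half-space 𝔥 (open, with complement having nonempty interior) such that C ⊆ 𝔥 and C′ ⊆ 𝔥*. -/

import Mathlib

def MedInterval {M : Type*} (m : M → M → M → M) (x y : M) : Set M := {u | m x y u = u}

def MedConvex {M : Type*} (m : M → M → M → M) (C : Set M) : Prop :=
  ∀ x ∈ C, ∀ y ∈ C, MedInterval m x y ⊆ C

def IsMedian {M : Type*} (m : M → M → M → M) : Prop :=
  (∀ x y z, m x y z = m x z y) ∧ (∀ x y z, m x y z = m y x z) ∧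
  (∀ x y, m x x y = x) ∧
  (∀ x y z u v, m (m x y z) u v = m x (m y u v) (m z u v))

def IsHalfSpace {M : Type*} (m : M → M → M → M) (h : Set M) : Prop :=
  MedConvex m h ∧ MedConvex m hᶜ ∧ h.Nonempty ∧ hᶜ.Nonempty

def LocOpenConvex {M : Type*} [TopologicalSpace M] (m : M → M → M → M) : Prop :=
  ∀ x : M, ∀ U ∈ nhds x, ∃ V : Set M, IsOpen V ∧ MedConvex m V ∧ x ∈ V ∧ V ⊆ U

/-!
An open convex set `V` and a disjoint convex set `K` are separated by a Kakutani-type argument: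
enlarge `K` to a convex `B` maximal among those missing `V`, then `V` to a convex `A` maximal
among those missing `B`. Joining an outside point with `A` and with `B` shows `A = Bᶜ`, and `B`
is closed because closures of convex sets are convex, so `A` is an open half-space. Applied to
small open convex neighbourhoods, compactness together with a Helly-type property of half-spaces
through a common point upgrades this to the separation of disjoint closed convex sets.

For the interior condition, first separate `C'` from `C` by an open half-space `g`, fatten `C'`
to its join with the closure of an open convex neighbourhood `W` with `closure W ⊆ g`, and
separate `C` from this fattened set: its complementary half-space then contains `W`.
-/

section

open Set Topology

variable {M : Type*} {m : M → M → M → M}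

namespace IsMedian

theorem swap_right (hm : IsMedian m) (x y z : M) : m x y z = m x z y := hm.1 x y z

theorem swap_left (hm : IsMedian m) (x y z : M) : m x y z = m y x z := hm.2.1 x y z

theorem majority_left (hm : IsMedian m) (x y : M) : m x x y = x := hm.2.2.1 x y

theorem distrib (hm : IsMedian m) (x y z u v : M) :
    m (m x y z) u v = m x (m y u v) (m z u v) :=
  hm.2.2.2 x y z u v

theorem majority_outer (hm : IsMedian m) (x y : M) : m x y x = x := by
  rw [hm.swap_right x y x, hm.majority_left]

theorem majority_right (hm : IsMedian m) (x y : M) : m x y y = y := by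
  rw [hm.swap_left x y y, hm.swap_right y x y, hm.majority_left]

theorem median_mem_medInterval (hm : IsMedian m) (x y z : M) :
    m x y z ∈ MedInterval m x y :=
  calc m x y (m x y z)
      = m (m z x y) x y := by
        rw [hm.swap_right x y (m x y z), hm.swap_left x (m x y z) y, hm.swap_right x y z,
          hm.swap_left x z y]
    _ = m z x (m y x y) := by rw [hm.distrib, hm.majority_left]
    _ = m x y z := by rw [hm.majority_outer, hm.swap_left z, hm.swap_right x z y]

theorem median_mem_medInterval' (hm : IsMedian m) (w x y : M) :
    m w x y ∈ MedInterval m x y := by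
  rw [hm.swap_left w x y, hm.swap_right x w y]
  exact hm.median_mem_medInterval x y w

theorem median_mem_medInterval_of_mem (hm : IsMedian m) {z c₁ c₂ a b : M}
    (hb : b ∈ MedInterval m z c₁) (ha : a ∈ MedInterval m z c₂) :
    m a b c₁ ∈ MedInterval m b c₂ :=
  calc m b c₂ (m a b c₁)
      = m c₂ (m z b c₁) (m a b c₁) := by
        rw [hm.swap_left b c₂, hm.swap_right z b c₁]; exact congrArg (m c₂ · _) hb.symm
    _ = m (m z c₂ a) b c₁ := by rw [hm.swap_left z c₂ a, hm.distrib]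
    _ = m a b c₁ := by rw [show m z c₂ a = a from ha]

/-! For fixed `w`, the operation `(a, b) ↦ m w a b` is associative and commutative. -/

theorem median_assoc (hm : IsMedian m) (w a b c : M) : m w (m w a b) c = m w a (m w b c) :=
  calc m w (m w a b) c
      = m (m a w b) w c := by rw [hm.swap_left w (m w a b) c, hm.swap_left w a b]
    _ = m w a (m w b c) := by
        rw [hm.distrib, hm.majority_left, hm.swap_left a w, hm.swap_left b w c]

theorem median_median_comm (hm : IsMedian m) (w a b c d : M) :
    m w (m w a b) (m w c d) = m w (m w a c) (m w b d) := by
  rw [hm.median_assoc, ← hm.median_assoc w b, hm.swap_right w b c, hm.median_assoc w c,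
    ← hm.median_assoc w a]

theorem median_median_of_mem_medInterval (hm : IsMedian m) (w : M) {p q u : M}
    (hu : u ∈ MedInterval m p q) : m w (m w p q) u = m w p q :=
  calc m w (m w p q) u
      = m w (m w p q) (m u p q) := by
        rw [hm.swap_left u p q, hm.swap_right p u q]; exact congrArg _ hu.symm
    _ = m w p q := by rw [← hm.distrib, hm.majority_left]

theorem mem_medInterval_median_median (hm : IsMedian m) {p₁ q₁ p₂ q₂ u v w : M}
    (hu : u ∈ MedInterval m p₁ q₁) (hv : v ∈ MedInterval m p₂ q₂)
    (hw : w ∈ MedInterval m u v) : w ∈ MedInterval m (m w p₁ p₂) (m w q₁ q₂) :=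
  calc m (m w p₁ p₂) (m w q₁ q₂) w
      = m w (m w p₁ q₁) (m w p₂ q₂) := by
        rw [hm.swap_right, hm.swap_left _ w, hm.median_median_comm]
    _ = m w (m w (m w p₁ q₁) (m w p₂ q₂)) (m w u v) := by
        rw [hm.median_median_comm w (m w p₁ q₁) (m w p₂ q₂) u v,
          hm.median_median_of_mem_medInterval w hu,
          hm.median_median_of_mem_medInterval w hv]
    _ = w := by
        rw [hm.swap_left w u v, hm.swap_right u w v, show m u v w = w from hw,
          hm.majority_outer]

end IsMedian

theorem medConvex_singleton (hm : IsMedian m) (z : M) : MedConvex m {z} := by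
  intro x hx y hy u hu
  rw [mem_singleton_iff] at hx hy ⊢
  subst hx hy
  exact hu.symm.trans (hm.majority_left _ u)

theorem medConvex_sUnion_of_isChain {c : Set (Set M)} (hc : IsChain (· ⊆ ·) c)
    (h : ∀ s ∈ c, MedConvex m s) : MedConvex m (⋃₀ c) := by
  rintro x ⟨s, hs, hxs⟩ y ⟨t, ht, hyt⟩
  rcases hc.total hs ht with hst | hts
  · exact (h t ht x (hst hxs) y hyt).trans (subset_sUnion_of_mem ht)
  · exact (h s hs x hxs y (hts hyt)).trans (subset_sUnion_of_mem hs)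

theorem MedConvex.inter_biInter_nonempty (hm : IsMedian m) {C : Set M} (hC : MedConvex m C)
    (hCne : C.Nonempty) {ι : Type*} {H : ι → Set M} {c : M} (s : Finset ι)
    (hH : ∀ i ∈ s, MedConvex m (H i)) (hcH : ∀ i ∈ s, c ∈ H i)
    (hCH : ∀ i ∈ s, (C ∩ H i).Nonempty) : (C ∩ ⋂ i ∈ s, H i).Nonempty := by
  classical
  induction s using Finset.induction_on with
  | empty => simpa using hCne
  | insert a s _ ih =>
    simp only [Finset.mem_insert, forall_eq_or_imp] at hH hcH hCH
    obtain ⟨y, hyC, hyH⟩ := ih hH.2 hcH.2 hCH.2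
    obtain ⟨x, hxC, hxH⟩ := hCH.1
    -- `m y x c` lies between any two of `y`, `x` and `c`.
    refine ⟨m y x c, hC y hyC x hxC (hm.median_mem_medInterval y x c), ?_⟩
    rw [Finset.set_biInter_insert]
    refine ⟨hH.1 x hxH c hcH.1 (hm.median_mem_medInterval' y x c),
      mem_iInter₂.2 fun i hi => ?_⟩
    rw [hm.swap_right y x c]
    exact hH.2 i hi y (mem_iInter₂.1 hyH i hi) c (hcH.2 i hi)
      (hm.median_mem_medInterval y c x)

theorem MedConvex.exists_subset_of_subset_biUnion (hm : IsMedian m) {C : Set M}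
    (hC : MedConvex m C) (hCne : C.Nonempty) {ι : Type*} {A : ι → Set M} {c : M}
    (s : Finset ι) (hA : ∀ i ∈ s, MedConvex m (A i)ᶜ) (hcA : ∀ i ∈ s, c ∉ A i)
    (hCs : C ⊆ ⋃ i ∈ s, A i) :
    ∃ i ∈ s, C ⊆ A i := by
  by_contra! hCA
  obtain ⟨y, hyC, hyA⟩ :=
    hC.inter_biInter_nonempty hm hCne s hA hcA fun i hi => not_subset.1 (hCA i hi)
  obtain ⟨i, hi, hyi⟩ := mem_iUnion₂.1 (hCs hyC)
  exact mem_iInter₂.1 hyA i hi hyi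

def medJoin (m : M → M → M → M) (P Q : Set M) : Set M :=
  {t | ∃ a ∈ P, ∃ b ∈ Q, t ∈ MedInterval m a b}

theorem medConvex_medJoin (hm : IsMedian m) {P Q : Set M} (hP : MedConvex m P)
    (hQ : MedConvex m Q) : MedConvex m (medJoin m P Q) := by
  rintro x ⟨p₁, hp₁, q₁, hq₁, hx⟩ y ⟨p₂, hp₂, q₂, hq₂, hy⟩ w hw
  exact ⟨m w p₁ p₂, hP p₁ hp₁ p₂ hp₂ (hm.median_mem_medInterval' w p₁ p₂),
    m w q₁ q₂, hQ q₁ hq₁ q₂ hq₂ (hm.median_mem_medInterval' w q₁ q₂),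
    hm.mem_medInterval_median_median hx hy hw⟩

theorem subset_medJoin_left (hm : IsMedian m) {P Q : Set M} (hQ : Q.Nonempty) :
    P ⊆ medJoin m P Q := fun a ha =>
  ⟨a, ha, hQ.some, hQ.some_mem, hm.majority_outer a hQ.some⟩

theorem subset_medJoin_right (hm : IsMedian m) {P Q : Set M} (hP : P.Nonempty) :
    Q ⊆ medJoin m P Q := fun b hb =>
  ⟨hP.some, hP.some_mem, b, hb, hm.majority_right hP.some b⟩

theorem medJoin_subset {P Q G : Set M} (hG : MedConvex m G) (hPG : P ⊆ G) (hQG : Q ⊆ G) :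
    medJoin m P Q ⊆ G := by
  rintro t ⟨a, ha, b, hb, ht⟩
  exact hG a (hPG ha) b (hQG hb) ht

theorem exists_maximal_medConvex_disjoint {K V : Set M} (hK : MedConvex m K)
    (hKV : Disjoint K V) :
    ∃ B, K ⊆ B ∧ Maximal (fun D => MedConvex m D ∧ Disjoint D V) B :=
  zorn_subset_nonempty {D | MedConvex m D ∧ Disjoint D V}
    (fun c hcS hc _ => ⟨⋃₀ c, ⟨medConvex_sUnion_of_isChain hc fun _ hs => (hcS hs).1,
      disjoint_sUnion_left.2 fun _ hs => (hcS hs).2⟩, fun _ hs => subset_sUnion_of_mem hs⟩)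
    K ⟨hK, hKV⟩

theorem exists_mem_medInterval_of_maximal (hm : IsMedian m) {A V : Set M}
    (hA : Maximal (fun D => MedConvex m D ∧ Disjoint D V) A) (hAne : A.Nonempty) {z : M}
    (hz : z ∉ A) : ∃ a ∈ A, ∃ v ∈ V, v ∈ MedInterval m z a := by
  have hJ : ¬Disjoint (medJoin m {z} A) V := fun hJV =>
    hz <| hA.eq_of_superset ⟨medConvex_medJoin hm (medConvex_singleton hm z) hA.prop.1, hJV⟩
      (subset_medJoin_right hm (singleton_nonempty z)) ▸ subset_medJoin_left hm hAne rfl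
  obtain ⟨v, ⟨_, rfl, a, ha, hv⟩, hvV⟩ := not_disjoint_iff.1 hJ
  exact ⟨a, ha, v, hvV, hv⟩

theorem compl_eq_of_maximal_medConvex_disjoint (hm : IsMedian m) {A B V : Set M}
    (hB : Maximal (fun D => MedConvex m D ∧ Disjoint D V) B)
    (hA : Maximal (fun D => MedConvex m D ∧ Disjoint D B) A) (hVA : V ⊆ A)
    (hAne : A.Nonempty) (hBne : B.Nonempty) : Aᶜ = B := by
  refine subset_antisymm (fun z hzA => by_contra fun hzB => ?_)
    (subset_compl_iff_disjoint_left.2 hA.prop.2)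
  obtain ⟨a, ha, b, hb, hbza⟩ := exists_mem_medInterval_of_maximal hm hA hAne hzA
  obtain ⟨b', hb', v, hv, hvzb'⟩ := exists_mem_medInterval_of_maximal hm hB hBne hzB
  -- `b ∈ [z, a]` and `v ∈ [z, b']` put `m v b a` into both `[b, b']` and `[v, a]`.
  have hsB : m v b a ∈ B :=
    hB.prop.1 b hb b' hb' (hm.median_mem_medInterval_of_mem hbza hvzb')
  have hsA : m v b a ∈ A := by
    refine hA.prop.1 v (hVA hv) a ha ?_
    rw [hm.swap_right v b a]
    exact hm.median_mem_medInterval v a b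
  exact disjoint_left.1 hA.prop.2 hsA hsB

section Topology

variable [TopologicalSpace M]

theorem medConvex_closure (hm : IsMedian m)
    (hcont : Continuous fun p : M × M × M => m p.1 p.2.1 p.2.2) {D : Set M}
    (hD : MedConvex m D) : MedConvex m (closure D) := by
  intro x hx y hy u hu
  have hc : Continuous (Function.uncurry fun a b => m a b u) := by fun_prop
  have := map_mem_closure₂ hc hx hy fun a ha b hb =>
    hD a ha b hb (hm.median_mem_medInterval a b u)
  rwa [hu] at this

theorem isClosed_medJoin [CompactSpace M] [T2Space M]
    (hcont : Continuous fun p : M × M × M => m p.1 p.2.1 p.2.2) {P Q : Set M}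
    (hP : IsClosed P) (hQ : IsClosed Q) : IsClosed (medJoin m P Q) := by
  let S : Set (M × M × M) := {p | p.1 ∈ P ∧ p.2.1 ∈ Q ∧ m p.1 p.2.1 p.2.2 = p.2.2}
  have hS : IsClosed S := (hP.preimage continuous_fst).inter
    ((hQ.preimage (by fun_prop)).inter (isClosed_eq hcont (by fun_prop)))
  have hJ : medJoin m P Q = (fun p : M × M × M => p.2.2) '' S := by
    ext t
    constructor
    · rintro ⟨a, ha, b, hb, ht⟩
      exact ⟨(a, b, t), ⟨ha, hb, ht⟩, rfl⟩
    · rintro ⟨⟨a, b, t⟩, ⟨ha, hb, ht⟩, rfl⟩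
      exact ⟨a, ha, b, hb, ht⟩
  rw [hJ]
  exact (hS.isCompact.image (by fun_prop)).isClosed

theorem isClosed_of_maximal_medConvex_disjoint (hm : IsMedian m)
    (hcont : Continuous fun p : M × M × M => m p.1 p.2.1 p.2.2) {B V : Set M} (hV : IsOpen V)
    (hB : Maximal (fun D => MedConvex m D ∧ Disjoint D V) B) : IsClosed B :=
  closure_eq_iff_isClosed.1 <| hB.eq_of_superset
    ⟨medConvex_closure hm hcont hB.prop.1, hB.prop.2.closure_left hV⟩ subset_closure

theorem exists_isOpen_isHalfSpace_of_isOpen (hm : IsMedian m)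
    (hcont : Continuous fun p : M × M × M => m p.1 p.2.1 p.2.2) {V K : Set M}
    (hVo : IsOpen V) (hVc : MedConvex m V) (hVne : V.Nonempty) (hKc : MedConvex m K)
    (hKne : K.Nonempty) (hKV : Disjoint K V) :
    ∃ A, IsHalfSpace m A ∧ IsOpen A ∧ V ⊆ A ∧ K ⊆ Aᶜ := by
  obtain ⟨B, hKB, hB⟩ := exists_maximal_medConvex_disjoint hKc hKV
  obtain ⟨A, hVA, hA⟩ := exists_maximal_medConvex_disjoint hVc hB.prop.2.symm
  have hAB : Aᶜ = B :=
    compl_eq_of_maximal_medConvex_disjoint hm hB hA hVA (hVne.mono hVA) (hKne.mono hKB)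
  refine ⟨A, ⟨hA.prop.1, hAB ▸ hB.prop.1, hVne.mono hVA, hAB ▸ hKne.mono hKB⟩, ?_, hVA,
    hAB ▸ hKB⟩
  rw [← compl_compl A, hAB]
  exact (isClosed_of_maximal_medConvex_disjoint hm hcont hVo hB).isOpen_compl

namespace LocOpenConvex

theorem exists_isOpen_closure_subset [RegularSpace M] (hloc : LocOpenConvex m) {x : M}
    {U : Set M} (hU : U ∈ 𝓝 x) : ∃ W, IsOpen W ∧ MedConvex m W ∧ x ∈ W ∧ closure W ⊆ U := by
  obtain ⟨F, hF, hFcl, hFU⟩ := exists_mem_nhds_isClosed_subset hU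
  obtain ⟨W, hWo, hWc, hxW, hWF⟩ := hloc x F hF
  exact ⟨W, hWo, hWc, hxW, (closure_minimal hWF hFcl).trans hFU⟩

theorem exists_isOpen_isHalfSpace_of_notMem (hloc : LocOpenConvex m) (hm : IsMedian m)
    (hcont : Continuous fun p : M × M × M => m p.1 p.2.1 p.2.2) {K : Set M}
    (hKcl : IsClosed K) (hKc : MedConvex m K) (hKne : K.Nonempty) {x : M} (hx : x ∉ K) :
    ∃ A, IsHalfSpace m A ∧ IsOpen A ∧ x ∈ A ∧ K ⊆ Aᶜ := by
  obtain ⟨V, hVo, hVc, hxV, hVK⟩ := hloc x Kᶜ (hKcl.isOpen_compl.mem_nhds hx)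
  obtain ⟨A, hA, hAo, hVA, hKA⟩ := exists_isOpen_isHalfSpace_of_isOpen hm hcont hVo hVc
    ⟨x, hxV⟩ hKc hKne (subset_compl_iff_disjoint_left.1 hVK)
  exact ⟨A, hA, hAo, hVA hxV, hKA⟩

theorem exists_isOpen_isHalfSpace_of_isClosed [CompactSpace M] (hloc : LocOpenConvex m)
    (hm : IsMedian m) (hcont : Continuous fun p : M × M × M => m p.1 p.2.1 p.2.2)
    {D E : Set M} (hDcl : IsClosed D) (hEcl : IsClosed E) (hDc : MedConvex m D)
    (hEc : MedConvex m E) (hDne : D.Nonempty) (hEne : E.Nonempty) (hDE : Disjoint D E) :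
    ∃ A, IsHalfSpace m A ∧ IsOpen A ∧ D ⊆ A ∧ E ⊆ Aᶜ := by
  have hsep : ∀ x ∈ D, ∃ A, IsHalfSpace m A ∧ IsOpen A ∧ x ∈ A ∧ E ⊆ Aᶜ := fun x hx =>
    hloc.exists_isOpen_isHalfSpace_of_notMem hm hcont hEcl hEc hEne (disjoint_left.1 hDE hx)
  choose! A hA hAo hxA hEA using hsep
  obtain ⟨s, hsD, hDs⟩ :=
    hDcl.isCompact.elim_nhds_subcover A fun x hx => (hAo x hx).mem_nhds (hxA x hx)
  obtain ⟨e, he⟩ := hEne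
  obtain ⟨x, hxs, hDA⟩ := hDc.exists_subset_of_subset_biUnion hm hDne s
    (fun x hx => (hA x (hsD x hx)).2.1) (fun x hx => hEA x (hsD x hx) he) hDs
  exact ⟨A x, hA x (hsD x hxs), hAo x (hsD x hxs), hDA, hEA x (hsD x hxs)⟩

end LocOpenConvex

end Topology

end

theorem stmt10_general {M : Type*} [TopologicalSpace M] [T2Space M] [CompactSpace M]
    (m : M → M → M → M) (hm : IsMedian m)
    (hcont : Continuous fun p : M × M × M => m p.1 p.2.1 p.2.2)
    (hloc : LocOpenConvex m)
    (C C' : Set M) (hCcl : IsClosed C) (hC'cl : IsClosed C')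
    (hCc : MedConvex m C) (hC'c : MedConvex m C')
    (hCn : C.Nonempty) (hC'n : C'.Nonempty) (hdisj : Disjoint C C') :
    ∃ h : Set M, IsHalfSpace m h ∧ IsOpen h ∧ (interior hᶜ).Nonempty ∧
      C ⊆ h ∧ C' ⊆ hᶜ := by
  obtain ⟨g, hg, hgo, hC'g, hCg⟩ := hloc.exists_isOpen_isHalfSpace_of_isClosed hm hcont
    hC'cl hCcl hC'c hCc hC'n hCn hdisj.symm
  obtain ⟨c', hc'⟩ := hC'n
  obtain ⟨W, hWo, hWc, hc'W, hWg⟩ := hloc.exists_isOpen_closure_subset (hgo.mem_nhds (hC'g hc'))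
  set K := medJoin m C' (closure W)
  have hC'K : C' ⊆ K := subset_medJoin_left hm ⟨c', subset_closure hc'W⟩
  have hWK : W ⊆ K := subset_closure.trans (subset_medJoin_right hm ⟨c', hc'⟩)
  have hCK : Disjoint C K := disjoint_compl_left.mono hCg (medJoin_subset hg.1 hC'g hWg)
  obtain ⟨h, hh, hho, hCh, hKh⟩ := hloc.exists_isOpen_isHalfSpace_of_isClosed hm hcont hCcl
    (isClosed_medJoin hcont hC'cl isClosed_closure) hCc
    (medConvex_medJoin hm hC'c (medConvex_closure hm hcont hWc)) hCn ⟨c', hC'K hc'⟩ hCK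
  exact ⟨h, hh, hho, ⟨c', interior_maximal (hWK.trans hKh) hWo hc'W⟩, hCh, hC'K.trans hKh⟩

theorem stmt10 {M : Type*} [TopologicalSpace M] [T2Space M] [CompactSpace M]
    [SecondCountableTopology M]
    (m : M → M → M → M) (hm : IsMedian m)
    (hcont : Continuous fun p : M × M × M => m p.1 p.2.1 p.2.2)
    (hloc : LocOpenConvex m)
    (C C' : Set M) (hCcl : IsClosed C) (hC'cl : IsClosed C')
    (hCc : MedConvex m C) (hC'c : MedConvex m C')
    (hCn : C.Nonempty) (hC'n : C'.Nonempty) (hdisj : Disjoint C C') :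
    ∃ h : Set M, IsHalfSpace m h ∧ IsOpen h ∧ (interior hᶜ).Nonempty ∧
      C ⊆ h ∧ C' ⊆ hᶜ :=
  stmt10_general m hm hcont hloc C C' hCcl hC'cl hCc hC'c hCn hC'n hdisj
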